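/- arXiv:2010.10290 — 6 statements merged into one kernel-verified Lean document; each statement's English description precedes it below -/
import Mathlib

section
/- For positive integers p, q, the rearrangement of the alternating harmonic series in which blocks of p positive terms (odd reciprocals in order) alternate with blocks of q negative terms (even reciprocals in order) converges to ln 2 + (1/2)·ln(p/q). -/
open Filter Topology




namespace RB
noncomputable def H (n : ℕ) : ℝ := ∑ i ∈ Finset.range n, 1 / ((i : ℝ) + 1)
noncomputable def A (n : ℕ) : ℝ := ∑ i ∈ Finset.range n, 1 / (2 * (i : ℝ) + 1)
noncomputable def B (n : ℕ) : ℝ := ∑ i ∈ Finset.range n, 1 / (2 * (i : ℝ) + 2)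

lemma H_eq (n : ℕ) : H n = (harmonic n : ℝ) := by
  rw [H, harmonic]
  push_cast
  refine Finset.sum_congr rfl fun i _ => ?_
  rw [one_div]

lemma A_eq (n : ℕ) : A n = H (2 * n) - (1 / 2) * H n := by
  induction n with
  | zero => simp [A, H]
  | succ n ih =>
    have h2 : 2 * (n + 1) = (2 * n + 1) + 1 := by ring
    rw [A, Finset.sum_range_succ, ← A, ih, h2]
    simp only [H, Finset.sum_range_succ]
    push_cast
    have h1 : (2 : ℝ) * n + 1 ≠ 0 := by positivity
    have h3 : (n : ℝ) + 1 ≠ 0 := by positivity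
    field_simp
    ring
  
lemma B_eq (n : ℕ) : B n = (1 / 2) * H n := by
  induction n with
  | zero => simp [B, H]
  | succ n ih =>
    rw [B, Finset.sum_range_succ, ← B, ih]
    simp only [H, Finset.sum_range_succ]
    push_cast
    have h3 : (n : ℝ) + 1 ≠ 0 := by positivity
    field_simp

lemma A_succ (n : ℕ) : A (n + 1) = A n + 1 / (2 * (n : ℝ) + 1) := by
  rw [A, Finset.sum_range_succ, ← A]

lemma B_succ (n : ℕ) : B (n + 1) = B n + 1 / (2 * (n : ℝ) + 2) := by
  rw [B, Finset.sum_range_succ, ← B]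

def pc (p q N : ℕ) : ℕ := (N / (p + q)) * p + min (N % (p + q)) p
def nc (p q N : ℕ) : ℕ := (N / (p + q)) * q + (N % (p + q) - p)

lemma sum_eq (p q : ℕ) (hp : 0 < p) (hq : 0 < q) (N : ℕ) :
    ∑ n ∈ Finset.range N, (if n % (p + q) < p
          then (1 : ℝ) / (2 * (((n / (p + q)) * p + n % (p + q) : ℕ) : ℝ) + 1)
          else -1 / (2 * (((n / (p + q)) * q + (n % (p + q) - p) : ℕ) : ℝ) + 2))
    = A (pc p q N) - B (nc p q N) := by
  have hpq : 0 < p + q := by omega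
  induction N with
  | zero => simp [pc, nc, A, B]
  | succ N ih =>
    rw [Finset.sum_range_succ, ih]
    have hN : N = (p + q) * (N / (p + q)) + N % (p + q) := (Nat.div_add_mod N (p + q)).symm
    set k := N / (p + q) with hk
    set r := N % (p + q) with hr
    have hrlt : r < p + q := Nat.mod_lt _ hpq
    by_cases hcase : r + 1 < p + q
    · have h1 : N + 1 = (p + q) * k + (r + 1) := by omega
      have hd : (N + 1) / (p + q) = k := by
        rw [h1, Nat.mul_add_div hpq, Nat.div_eq_of_lt hcase, add_zero]
      have hm : (N + 1) % (p + q) = r + 1 := by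
        rw [h1, Nat.mul_add_mod, Nat.mod_eq_of_lt hcase]
      by_cases h : r < p
      · rw [if_pos h]
        have hpc : pc p q (N + 1) = k * p + r + 1 := by
          rw [pc, hd, hm]; omega
        have hpc' : pc p q N = k * p + r := by
          rw [pc, ← hk, ← hr]; omega
        have hnc : nc p q (N + 1) = nc p q N := by
          rw [nc, nc, hd, hm, ← hk, ← hr]; omega
        rw [hpc, hpc', hnc, A_succ]
        push_cast
        ring
      · rw [if_neg h]
        have hnc : nc p q (N + 1) = k * q + (r - p) + 1 := by
          rw [nc, hd, hm]; omega
        have hnc' : nc p q N = k * q + (r - p) := by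
          rw [nc, ← hk, ← hr]
        have hpc : pc p q (N + 1) = pc p q N := by
          rw [pc, pc, hd, hm, ← hk, ← hr]; omega
        rw [hpc, hnc, hnc', B_succ]
        push_cast
        ring
    · -- rollover: r + 1 = p + q
      have hre : r = p + q - 1 := by omega
      have hmul : (p + q) * (k + 1) = (p + q) * k + (p + q) := by ring
      have h1 : N + 1 = (p + q) * (k + 1) := by omega
      have hd : (N + 1) / (p + q) = k + 1 := by
        rw [h1, Nat.mul_div_cancel_left _ hpq]
      have hm : (N + 1) % (p + q) = 0 := by
        rw [h1, Nat.mul_mod_right]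
      have h : ¬ r < p := by omega
      rw [if_neg h]
      have hnc : nc p q (N + 1) = k * q + (r - p) + 1 := by
        have hmq : (k + 1) * q = k * q + q := by ring
        rw [nc, hd, hm]; omega
      have hnc' : nc p q N = k * q + (r - p) := by
        rw [nc, ← hk, ← hr]
      have hpc : pc p q (N + 1) = pc p q N := by
        have hmp : (k + 1) * p = k * p + p := by ring
        rw [pc, pc, hd, hm, ← hk, ← hr]; omega
      rw [hpc, hnc, hnc', B_succ]
      push_cast
      ring


lemma div_tendsto (p q : ℕ) (hpq : 0 < p + q) :
    Tendsto (fun N => N / (p + q)) atTop atTop := by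
  refine tendsto_atTop_atTop.2 fun b => ⟨b * (p + q), fun n hn => ?_⟩
  exact (Nat.le_div_iff_mul_le hpq).2 hn

lemma pc_tendsto (p q : ℕ) (hp : 0 < p) (hq : 0 < q) :
    Tendsto (fun N => pc p q N) atTop atTop := by
  refine tendsto_atTop_mono (fun N => ?_) (div_tendsto p q (by omega))
  have : N / (p + q) * 1 ≤ N / (p + q) * p := Nat.mul_le_mul_left _ hp
  simp only [pc]; omega

lemma nc_tendsto (p q : ℕ) (hp : 0 < p) (hq : 0 < q) :
    Tendsto (fun N => nc p q N) atTop atTop := by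
  refine tendsto_atTop_mono (fun N => ?_) (div_tendsto p q (by omega))
  have : N / (p + q) * 1 ≤ N / (p + q) * q := Nat.mul_le_mul_left _ hq
  simp only [nc]; omega

lemma ratio_tendsto (p q : ℕ) (hp : 0 < p) (hq : 0 < q) :
    Tendsto (fun N => (pc p q N : ℝ) / (nc p q N)) atTop (𝓝 ((p : ℝ) / q)) := by
  have hpq : 0 < p + q := by omega
  have hkt := div_tendsto p q hpq
  -- lower and upper bound functions
  have hlow : Tendsto (fun N => ((p : ℝ) * (N / (p + q) : ℕ)) / (q * ((N / (p + q) : ℕ) + 1)))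
      atTop (𝓝 ((p : ℝ) / q)) := by
    have houter : Tendsto (fun k : ℕ => ((p : ℝ) * k) / (q * (k + 1))) atTop (𝓝 ((p : ℝ) / q)) := by
      have h1 : Tendsto (fun k : ℕ => (k : ℝ) / (k + 1)) atTop (𝓝 1) :=
        tendsto_natCast_div_add_atTop (1 : ℝ)
      have := h1.const_mul ((p : ℝ) / q)
      rw [mul_one] at this
      refine this.congr' ?_
      filter_upwards [eventually_gt_atTop 0] with k hk
      have hk' : (k : ℝ) + 1 ≠ 0 := by positivity
      have hq' : (q : ℝ) ≠ 0 := by positivity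
      field_simp
    exact houter.comp hkt
  have hhigh : Tendsto (fun N => ((p : ℝ) * ((N / (p + q) : ℕ) + 1)) / (q * (N / (p + q) : ℕ)))
      atTop (𝓝 ((p : ℝ) / q)) := by
    have houter : Tendsto (fun k : ℕ => ((p : ℝ) * (k + 1)) / (q * k)) atTop (𝓝 ((p : ℝ) / q)) := by
      have h0 : Tendsto (fun k : ℕ => 1 + 1 / (k : ℝ)) atTop (𝓝 1) := by
        have := (tendsto_one_div_atTop_nhds_zero_nat (𝕜 := ℝ)).const_add 1
        simpa using this
      have := h0.const_mul ((p : ℝ) / q)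
      rw [mul_one] at this
      refine this.congr' ?_
      filter_upwards [eventually_gt_atTop 0] with k hk
      have hk' : (k : ℝ) ≠ 0 := by positivity
      have hq' : (q : ℝ) ≠ 0 := by positivity
      field_simp
    exact houter.comp hkt
  refine tendsto_of_tendsto_of_tendsto_of_le_of_le' hlow hhigh ?_ ?_
  · filter_upwards [hkt.eventually_ge_atTop 1] with N hk1
    set k := N / (p + q) with hkdef
    have hrlt : N % (p + q) < p + q := Nat.mod_lt _ hpq
    have h1 : k * p ≤ pc p q N := Nat.le_add_right _ _
    have h2 : nc p q N ≤ k * q + q := by rw [nc, ← hkdef]; omega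
    have h3 : (0:ℕ) < nc p q N := by
      have : 1 * q ≤ k * q := Nat.mul_le_mul_right _ hk1
      rw [nc, ← hkdef]; omega
    have c1 : (p : ℝ) * k ≤ (pc p q N : ℝ) := by
      rw [mul_comm]; exact_mod_cast Nat.cast_le.2 h1
    have c2 : (nc p q N : ℝ) ≤ (q : ℝ) * (k + 1) := by
      have : ((nc p q N : ℕ) : ℝ) ≤ ((k * q + q : ℕ) : ℝ) := Nat.cast_le.2 h2
      push_cast at this ⊢
      nlinarith
    have c3 : (0:ℝ) < (nc p q N : ℝ) := by exact_mod_cast h3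
    exact div_le_div₀ (Nat.cast_nonneg _) c1 c3 c2
  · filter_upwards [hkt.eventually_ge_atTop 1] with N hk1
    set k := N / (p + q) with hkdef
    have hrlt : N % (p + q) < p + q := Nat.mod_lt _ hpq
    have h1 : pc p q N ≤ k * p + p := by rw [pc, ← hkdef]; omega
    have h3 : (0:ℕ) < k * q := by
      have : 1 * q ≤ k * q := Nat.mul_le_mul_right _ hk1
      omega
    have c1 : (pc p q N : ℝ) ≤ (p : ℝ) * (k + 1) := by
      have : ((pc p q N : ℕ) : ℝ) ≤ ((k * p + p : ℕ) : ℝ) := Nat.cast_le.2 h1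
      push_cast at this ⊢
      nlinarith
    have c2 : (q : ℝ) * k ≤ (nc p q N : ℝ) := by
      have : ((k * q : ℕ) : ℝ) ≤ (nc p q N : ℝ) := Nat.cast_le.2 (Nat.le_add_right _ _)
      push_cast at this ⊢
      nlinarith
    have c3 : (0:ℝ) < (q : ℝ) * k := by
      have : (0:ℝ) < ((k * q : ℕ) : ℝ) := by exact_mod_cast h3
      push_cast at this; nlinarith
    have cp : (0:ℝ) ≤ (p : ℝ) * (k + 1) := by positivity
    exact div_le_div₀ cp c1 c3 c2

end RB

theorem rearranged_blocks (p q : ℕ) (hp : 0 < p) (hq : 0 < q) :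
    Tendsto (fun N => ∑ n ∈ Finset.range N,
        (if n % (p + q) < p
          then (1 : ℝ) / (2 * (((n / (p + q)) * p + n % (p + q) : ℕ) : ℝ) + 1)
          else -1 / (2 * (((n / (p + q)) * q + (n % (p + q) - p) : ℕ) : ℝ) + 2)))
      atTop (𝓝 (Real.log 2 + (1 / 2) * Real.log ((p : ℝ) / q))) := by
  have hsum := RB.sum_eq p q hp hq
  set γ := Real.eulerMascheroniConstant with hγdef
  have hγ : Tendsto (fun n : ℕ => (harmonic n : ℝ) - Real.log n) atTop (𝓝 γ) :=
    Real.tendsto_harmonic_sub_log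
  have hpcT := RB.pc_tendsto p q hp hq
  have hncT := RB.nc_tendsto p q hp hq
  have h2pcT : Tendsto (fun N => 2 * RB.pc p q N) atTop atTop :=
    tendsto_atTop_mono (fun N => by omega) hpcT
  have T1 := hγ.comp h2pcT
  have T2 := hγ.comp hpcT
  have T3 := hγ.comp hncT
  have hratio := RB.ratio_tendsto p q hp hq
  have hpq0 : (0:ℝ) < (p:ℝ)/q := by positivity
  have T4 : Tendsto (fun N => Real.log ((RB.pc p q N : ℝ)/(RB.nc p q N))) atTop
      (𝓝 (Real.log ((p:ℝ)/q))) := (Real.continuousAt_log hpq0.ne').tendsto.comp hratio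
  have main := ((T1.sub (T2.const_mul (1/2 : ℝ))).sub (T3.const_mul (1/2 : ℝ))).add
    ((T4.const_mul (1/2 : ℝ)).const_add (Real.log 2))
  have hval : γ - 1/2 * γ - 1/2 * γ + (Real.log 2 + 1/2 * Real.log ((p:ℝ)/q))
      = Real.log 2 + (1/2) * Real.log ((p:ℝ)/q) := by ring
  rw [hval] at main
  refine main.congr' ?_
  filter_upwards [hpcT.eventually_ge_atTop 1, hncT.eventually_ge_atTop 1] with N h1 h2
  have hpc0 : (0:ℝ) < (RB.pc p q N : ℝ) := by
    have : 0 < RB.pc p q N := h1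
    exact_mod_cast this
  have hnc0 : (0:ℝ) < (RB.nc p q N : ℝ) := by
    have : 0 < RB.nc p q N := h2
    exact_mod_cast this
  simp only [Function.comp]
  rw [hsum N, RB.A_eq, RB.B_eq, RB.H_eq, RB.H_eq, RB.H_eq]
  push_cast
  rw [Real.log_mul two_ne_zero hpc0.ne', Real.log_div hpc0.ne' hnc0.ne']
  ring
end

section
/- For every real λ > 0, the series ∑_{n=0}^∞ (-1)ⁿ/(λn+1) converges and equals the integral ∫₀¹ dt/(1 + t^λ). -/
set_option maxHeartbeats 1000000


open Filter Topology MeasureTheory intervalIntegral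

theorem alternating_series_integral (lam : ℝ) (hlam : 0 < lam) :
    Tendsto (fun N => ∑ n ∈ Finset.range N, (-1 : ℝ) ^ n / (lam * n + 1))
      atTop (𝓝 (∫ t in (0 : ℝ)..1, 1 / (1 + t ^ lam))) := by
  -- integrability of 1/(1+t^lam)
  have hgint : IntervalIntegrable (fun t : ℝ => 1 / (1 + t ^ lam)) volume 0 1 := by
    apply ContinuousOn.intervalIntegrable
    rw [Set.uIcc_of_le zero_le_one]
    apply ContinuousOn.div continuousOn_const
    · exact continuousOn_const.add (continuousOn_id.rpow_const fun t ht => Or.inr hlam.le)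
    · intro t ht
      have : (0:ℝ) ≤ t ^ lam := Real.rpow_nonneg ht.1 lam
      positivity
  have hexp : ∀ n : ℕ, (-1:ℝ) < lam * n := fun n => by
    have : (0:ℝ) ≤ lam * n := mul_nonneg hlam.le n.cast_nonneg
    linarith
  have hne : ∀ n : ℕ, lam * (n:ℝ) + 1 ≠ 0 := fun n => by
    have := hexp n; intro h; linarith
  have hfint : ∀ n : ℕ, IntervalIntegrable (fun t : ℝ => (-1:ℝ)^n * t ^ (lam * n))
      volume 0 1 := fun n =>
    (intervalIntegrable_rpow (Or.inl (mul_nonneg hlam.le n.cast_nonneg))).const_mul _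
  -- partial sums written as integrals
  have key : ∀ N : ℕ, ∑ n ∈ Finset.range N, (-1:ℝ)^n / (lam * n + 1)
      = ∫ t in (0:ℝ)..1, ∑ n ∈ Finset.range N, (-1:ℝ)^n * t ^ (lam * n) := by
    intro N
    rw [intervalIntegral.integral_finset_sum (fun n _ => hfint n)]
    refine Finset.sum_congr rfl fun n _ => ?_
    rw [intervalIntegral.integral_const_mul,
      integral_rpow (Or.inl (hexp n)), Real.one_rpow,
      Real.zero_rpow (by have := hexp n; intro h; linarith)]
    rw [sub_zero, mul_one_div]
  -- the difference bound
  have hdiff : ∀ N : ℕ,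
      ‖(∑ n ∈ Finset.range N, (-1:ℝ)^n / (lam * n + 1)) - ∫ t in (0:ℝ)..1, 1 / (1 + t ^ lam)‖ ≤ 1 / (lam * N + 1) := by
    intro N
    have hsumint : IntervalIntegrable
        (fun t : ℝ => ∑ n ∈ Finset.range N, (-1:ℝ)^n * t ^ (lam * n)) volume 0 1 := by
      have h := IntervalIntegrable.sum (μ := volume) (a := (0:ℝ)) (b := 1)
        (f := fun (n : ℕ) (t : ℝ) => (-1:ℝ)^n * t ^ (lam * n)) (Finset.range N)
        (fun n _ => hfint n)
      simpa [Finset.sum_fn] using h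
    rw [key N, ← intervalIntegral.integral_sub hsumint hgint]
    have hNint : IntervalIntegrable (fun t : ℝ => t ^ (lam * N)) volume 0 1 :=
      intervalIntegrable_rpow (Or.inl (mul_nonneg hlam.le N.cast_nonneg))
    calc ‖∫ t in (0:ℝ)..1,
          ((∑ n ∈ Finset.range N, (-1:ℝ)^n * t ^ (lam * n)) - 1 / (1 + t ^ lam))‖
        ≤ |∫ t in (0:ℝ)..1, t ^ (lam * N)| := by
          apply intervalIntegral.norm_integral_le_abs_of_norm_le _ hNint
          filter_upwards [ae_restrict_mem measurableSet_uIoc] with t ht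
          rw [Set.uIoc_of_le zero_le_one] at ht
          have ht0 : 0 < t := ht.1
          have ht1 : t ≤ 1 := ht.2
          set s : ℝ := t ^ lam with hs
          have hs0 : 0 ≤ s := Real.rpow_nonneg ht0.le lam
          have hD : (0:ℝ) < 1 + s := by linarith
          have hpow : ∀ n : ℕ, t ^ (lam * n) = s ^ n := fun n => by
            rw [hs, ← Real.rpow_natCast (t ^ lam) n, ← Real.rpow_mul ht0.le]
          have hsum : ∑ n ∈ Finset.range N, (-1:ℝ)^n * t ^ (lam * n)
              = (1 - (-s)^N) / (1 + s) := by
            have h1 : ∀ n ∈ Finset.range N, (-1:ℝ)^n * t ^ (lam * n) = (-s)^n := by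
              intro n _
              rw [hpow n, ← neg_one_mul s, mul_pow]
            rw [Finset.sum_congr rfl h1, geom_sum_eq (by intro h; linarith)]
            rw [div_eq_div_iff (by intro h; apply hD.ne'; linarith) hD.ne']
            ring
          rw [hsum, div_sub_div_same]
          have : (1 - (-s)^N - 1) = -(-s)^N := by ring
          rw [this, Real.norm_eq_abs, abs_div, abs_neg, abs_pow, abs_neg,
            abs_of_nonneg hs0, abs_of_pos hD, hpow N]
          exact div_le_self (pow_nonneg hs0 N) (by linarith)
      _ = 1 / (lam * N + 1) := by
          rw [integral_rpow (Or.inl (hexp N)), Real.one_rpow,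
            Real.zero_rpow (hne N), sub_zero]
          exact abs_of_pos (one_div_pos.mpr (by have := hexp N; linarith))
  -- conclude
  have hlim : Tendsto (fun N : ℕ => 1 / (lam * N + 1)) atTop (𝓝 0) := by
    have h1 : Tendsto (fun N : ℕ => lam * N + 1) atTop atTop :=
      tendsto_atTop_add_const_right _ 1
        ((tendsto_natCast_atTop_atTop (R := ℝ)).const_mul_atTop hlam)
    simpa only [one_div, Pi.inv_def] using h1.inv_tendsto_atTop
  have h0 : Tendsto (fun N : ℕ =>
      (∑ n ∈ Finset.range N, (-1:ℝ)^n / (lam * n + 1)) - ∫ t in (0:ℝ)..1, 1 / (1 + t ^ lam)) atTop (𝓝 0) :=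
    squeeze_zero_norm hdiff hlim
  have := h0.add_const (∫ t in (0:ℝ)..1, 1 / (1 + t ^ lam))
  simpa using this
end

section
/- Let p be a positive integer and (aₙ)_{n≥0} a p-periodic sequence of complex numbers with a₀ + a₁ + ⋯ + a_{p-1} = 0. Then ∑_{n=0}^∞ aₙ/(n+1) converges and equals ∫₀¹ P(t)/(1 - t^p) dt, where P(x) = a₀ + a₁x + ⋯ + a_{p-1}x^{p-1}. -/
open Filter Topology MeasureTheory

private lemma aux_shift (p : ℕ) (a : ℕ → ℂ) (hper : ∀ n, a (n + p) = a n) :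
    ∀ N, ∑ j ∈ Finset.range p, a (N + j) = ∑ j ∈ Finset.range p, a j := by
  intro N
  induction N with
  | zero => simp
  | succ N ih =>
    have key : ∑ j ∈ Finset.range p, a (N + 1 + j) = ∑ j ∈ Finset.range p, a (N + j) := by
      have h1 := Finset.sum_range_succ' (fun j => a (N + j)) p
      have h2 := Finset.sum_range_succ (fun j => a (N + j)) p
      have h3 : a (N + p) = a (N + 0) := by simpa using hper N
      have h4 : ∑ j ∈ Finset.range p, a (N + 1 + j)
          = ∑ j ∈ Finset.range p, a (N + (j + 1)) :=
        Finset.sum_congr rfl fun j _ => by rw [show N + 1 + j = N + (j + 1) by omega]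
      have h5 := h1.symm.trans h2
      simp only [h3] at h5
      rw [h4]
      exact add_right_cancel h5
    rw [key, ih]

private lemma aux_id (p : ℕ) (a : ℕ → ℂ) (hper : ∀ n, a (n + p) = a n) (N : ℕ) (t : ℂ) :
    (∑ j ∈ Finset.range p, a j * t ^ j) - (1 - t ^ p) * ∑ n ∈ Finset.range N, a n * t ^ n
      = t ^ N * ∑ j ∈ Finset.range p, a (N + j) * t ^ j := by
  have h1 := Finset.sum_range_add (fun i => a i * t ^ i) p N
  have h2 := Finset.sum_range_add (fun i => a i * t ^ i) N p
  rw [Nat.add_comm p N] at h1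
  have e1 : t ^ p * ∑ n ∈ Finset.range N, a n * t ^ n
      = ∑ n ∈ Finset.range N, a (p + n) * t ^ (p + n) := by
    rw [Finset.mul_sum]
    refine Finset.sum_congr rfl fun n _ => ?_
    rw [show a (p + n) = a n from by rw [Nat.add_comm]; exact hper n, pow_add]
    ring
  have e2 : t ^ N * ∑ j ∈ Finset.range p, a (N + j) * t ^ j
      = ∑ j ∈ Finset.range p, a (N + j) * t ^ (N + j) := by
    rw [Finset.mul_sum]
    refine Finset.sum_congr rfl fun j _ => ?_
    rw [pow_add]; ring
  linear_combination e1 - e2 - h1 + h2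

private lemma aux_bound (p : ℕ) (hp : 0 < p) (b : ℕ → ℂ)
    (hb : ∑ j ∈ Finset.range p, b j = 0) (t : ℝ) (ht : t ∈ Set.Icc (0:ℝ) 1) :
    ‖(∑ j ∈ Finset.range p, b j * (t : ℂ) ^ j) / (1 - (t : ℂ) ^ p)‖
      ≤ ∑ j ∈ Finset.range p, ‖b j‖ * j := by
  obtain ⟨ht0, ht1⟩ := ht
  have hM0 : 0 ≤ ∑ j ∈ Finset.range p, ‖b j‖ * j :=
    Finset.sum_nonneg fun j _ => mul_nonneg (norm_nonneg _) (Nat.cast_nonneg _)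
  rcases eq_or_lt_of_le ht1 with h1 | h1
  · subst h1
    have h0 : (∑ j ∈ Finset.range p, b j * (1 : ℂ) ^ j) = 0 := by simpa using hb
    simp only [Complex.ofReal_one, h0, zero_div, norm_zero]
    exact hM0
  · have hnum : (∑ j ∈ Finset.range p, b j * (t : ℂ) ^ j)
        = ∑ j ∈ Finset.range p, b j * ((t : ℂ) ^ j - 1) := by
      rw [eq_comm]
      simp [mul_sub, Finset.sum_sub_distrib, hb]
    have hjb : ∀ j : ℕ, ‖(t : ℂ) ^ j - 1‖ ≤ j * (1 - t) := by
      intro j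
      have hc : (t : ℂ) ^ j - 1 = (((t ^ j - 1 : ℝ)) : ℂ) := by push_cast; ring
      rw [hc, Complex.norm_real, Real.norm_eq_abs]
      have hb1 : (1 : ℝ) + (j : ℝ) * (t - 1) ≤ (1 + (t - 1)) ^ j :=
        one_add_mul_le_pow (by linarith) j
      have htj : t ^ j ≤ 1 := pow_le_one₀ ht0 ht1
      rw [show (1 : ℝ) + (t - 1) = t by ring] at hb1
      rw [abs_of_nonpos (by linarith)]
      linarith
    have hnorm_num : ‖∑ j ∈ Finset.range p, b j * (t : ℂ) ^ j‖
        ≤ (∑ j ∈ Finset.range p, ‖b j‖ * j) * (1 - t) := by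
      rw [hnum]
      refine le_trans (norm_sum_le _ _) ?_
      rw [Finset.sum_mul]
      refine Finset.sum_le_sum fun j _ => ?_
      rw [norm_mul, mul_assoc]
      exact mul_le_mul_of_nonneg_left (hjb j) (norm_nonneg _)
    have hden : 1 - t ≤ ‖1 - (t : ℂ) ^ p‖ := by
      have hc : (1 : ℂ) - (t : ℂ) ^ p = (((1 - t ^ p : ℝ)) : ℂ) := by push_cast; ring
      rw [hc, Complex.norm_real, Real.norm_eq_abs]
      have htp : t ^ p ≤ t ^ 1 := pow_le_pow_of_le_one ht0 ht1 hp
      rw [pow_one] at htp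
      rw [abs_of_nonneg (by nlinarith [pow_le_one₀ ht0 ht1 (n := p)])]
      linarith
    have h1t : (0:ℝ) < 1 - t := by linarith
    rw [norm_div]
    calc ‖∑ j ∈ Finset.range p, b j * (t : ℂ) ^ j‖ / ‖1 - (t : ℂ) ^ p‖
        ≤ ((∑ j ∈ Finset.range p, ‖b j‖ * j) * (1 - t)) / (1 - t) :=
          div_le_div₀ (mul_nonneg hM0 h1t.le) hnorm_num h1t hden
      _ = ∑ j ∈ Finset.range p, ‖b j‖ * j := by field_simp

theorem periodic_series_integral (p : ℕ) (hp : 0 < p) (a : ℕ → ℂ)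
    (hper : ∀ n, a (n + p) = a n)
    (hsum : ∑ j ∈ Finset.range p, a j = 0) :
    Tendsto (fun N => ∑ n ∈ Finset.range N, a n / (n + 1))
      atTop
      (𝓝 (∫ t in (0 : ℝ)..1,
        (∑ j ∈ Finset.range p, a j * (t : ℂ) ^ j) / (1 - (t : ℂ) ^ p))) := by
  set F : ℝ → ℂ := fun t => (∑ j ∈ Finset.range p, a j * (t : ℂ) ^ j) / (1 - (t : ℂ) ^ p)
    with hFdef
  set G : ℕ → ℝ → ℂ := fun N t =>
      (∑ j ∈ Finset.range p, a (N + j) * (t : ℂ) ^ j) / (1 - (t : ℂ) ^ p) with hGdef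
  set A : ℝ := ∑ j ∈ Finset.range p, ‖a j‖ with hAdef
  have hA0 : 0 ≤ A := Finset.sum_nonneg fun j _ => norm_nonneg _
  have hmul : ∀ k n, a (n + k * p) = a n := by
    intro k
    induction k with
    | zero => simp
    | succ k ih =>
      intro n
      rw [show n + (k+1) * p = (n + k * p) + p by ring, hper, ih]
  have hAn : ∀ n, ‖a n‖ ≤ A := by
    intro n
    have h1 : a n = a (n % p) := by
      conv_lhs => rw [show n = n % p + (n / p) * p by rw [Nat.mod_add_div']]
      rw [hmul]
    rw [h1]
    exact Finset.single_le_sum (f := fun j => ‖a j‖) (fun i _ => norm_nonneg _)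
      (Finset.mem_range.2 (Nat.mod_lt n hp))
  set M : ℝ := A * p ^ 2 with hMdef
  have hM0 : 0 ≤ M := mul_nonneg hA0 (by positivity)
  have hshift0 : ∀ N, ∑ j ∈ Finset.range p, a (N + j) = 0 := fun N =>
    (aux_shift p a hper N).trans hsum
  have hsumM : ∀ N, ∑ j ∈ Finset.range p, ‖a (N + j)‖ * j ≤ M := by
    intro N
    calc ∑ j ∈ Finset.range p, ‖a (N + j)‖ * j
        ≤ ∑ _j ∈ Finset.range p, A * p := by
          refine Finset.sum_le_sum fun j hj => ?_
          exact mul_le_mul (hAn _) (Nat.cast_le.2 (Finset.mem_range.1 hj).le)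
            (Nat.cast_nonneg _) hA0
      _ = M := by rw [Finset.sum_const, Finset.card_range]; push_cast [hMdef]; ring
  have hGbound : ∀ N, ∀ t ∈ Set.Icc (0:ℝ) 1, ‖G N t‖ ≤ M := by
    intro N t ht
    exact le_trans (aux_bound p hp _ (hshift0 N) t ht) (hsumM N)
  have hcont1 : ∀ (b : ℕ → ℂ), Continuous fun t : ℝ => ∑ j ∈ Finset.range p, b j * (t : ℂ) ^ j :=
    fun b => continuous_finset_sum _ fun j _ =>
      continuous_const.mul (Complex.continuous_ofReal.pow j)
  have hcont2 : Continuous fun t : ℝ => 1 - (t : ℂ) ^ p :=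
    continuous_const.sub (Complex.continuous_ofReal.pow p)
  have hGmeas : ∀ N, Measurable (G N) := fun N =>
    ((hcont1 _).measurable).div hcont2.measurable
  have hii : ∀ (f : ℝ → ℂ), Measurable f → (∀ t ∈ Set.Icc (0:ℝ) 1, ‖f t‖ ≤ M) →
      IntervalIntegrable f volume 0 1 := by
    intro f hm hb
    rw [intervalIntegrable_iff, Set.uIoc_of_le zero_le_one]
    refine Integrable.mono' (g := fun _ => M)
      (integrableOn_const (C := M) measure_Ioc_lt_top.ne) (hm.aestronglyMeasurable.restrict) ?_
    exact (ae_restrict_iff' measurableSet_Ioc).2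
      (ae_of_all _ fun t ht => hb t ⟨ht.1.le, ht.2⟩)
  have hGint : ∀ N, IntervalIntegrable (G N) volume 0 1 := fun N =>
    hii _ (hGmeas N) (hGbound N)
  have hgint : ∀ N, IntervalIntegrable (fun t : ℝ => (t : ℂ) ^ N * G N t) volume 0 1 := by
    intro N
    refine hii _ (((Complex.continuous_ofReal.pow N).measurable).mul (hGmeas N)) ?_
    intro t ht
    rw [norm_mul]
    calc ‖(t:ℂ)^N‖ * ‖G N t‖ ≤ 1 * M := by
          apply mul_le_mul _ (hGbound N t ht) (norm_nonneg _) zero_le_one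
          rw [norm_pow, Complex.norm_real, Real.norm_eq_abs]
          exact pow_le_one₀ (abs_nonneg _) (by rw [abs_of_nonneg ht.1]; exact ht.2)
      _ = M := one_mul M
  have hFG : F = G 0 := by
    funext t
    simp [hFdef, hGdef]
  have hFint : IntervalIntegrable F volume 0 1 := hFG ▸ hGint 0
  have hps : ∀ N, ∑ n ∈ Finset.range N, a n / (n + 1)
      = ∫ t in (0:ℝ)..1, ∑ n ∈ Finset.range N, a n * (t : ℂ) ^ n := by
    intro N
    rw [intervalIntegral.integral_finset_sum (f := fun n (t : ℝ) => a n * (t : ℂ) ^ n) (fun n _ =>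
      (continuous_const.mul (Complex.continuous_ofReal.pow n)).intervalIntegrable 0 1)]
    refine Finset.sum_congr rfl fun n _ => ?_
    rw [intervalIntegral.integral_const_mul]
    have hpow : (∫ t in (0:ℝ)..1, (t : ℂ) ^ n) = 1 / (n + 1) := by
      have hcast : ∀ t : ℝ, (t : ℂ) ^ n = ((t ^ n : ℝ) : ℂ) := fun t => by push_cast; ring
      calc (∫ t in (0:ℝ)..1, (t : ℂ) ^ n) = ∫ t in (0:ℝ)..1, ((t ^ n : ℝ) : ℂ) := by
            simp_rw [hcast]
        _ = ((∫ t in (0:ℝ)..1, t ^ n : ℝ) : ℂ) := intervalIntegral.integral_ofReal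
        _ = 1 / (n + 1) := by rw [integral_pow]; push_cast; norm_num
    rw [hpow, mul_one_div]
  have hkey : ∀ N, (∫ t in (0:ℝ)..1, ∑ n ∈ Finset.range N, a n * (t : ℂ) ^ n)
      - (∫ t in (0:ℝ)..1, F t) = - ∫ t in (0:ℝ)..1, (t : ℂ) ^ N * G N t := by
    intro N
    have hSint : IntervalIntegrable (fun t : ℝ => ∑ n ∈ Finset.range N, a n * (t : ℂ) ^ n)
        volume 0 1 :=
      (continuous_finset_sum _ fun n _ =>
        continuous_const.mul (Complex.continuous_ofReal.pow n)).intervalIntegrable 0 1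
    rw [← intervalIntegral.integral_sub hSint hFint, ← intervalIntegral.integral_neg]
    rw [intervalIntegral.integral_of_le zero_le_one, intervalIntegral.integral_of_le zero_le_one]
    rw [integral_Ioc_eq_integral_Ioo, integral_Ioc_eq_integral_Ioo]
    refine setIntegral_congr_fun measurableSet_Ioo fun t ht => ?_
    obtain ⟨ht0, ht1⟩ := ht
    have hR : (1:ℝ) - t ^ p ≠ 0 :=
      ne_of_gt (by nlinarith [pow_lt_one₀ ht0.le ht1 hp.ne'])
    have hden : (1 : ℂ) - (t : ℂ) ^ p ≠ 0 := by
      rw [show (1 : ℂ) - (t : ℂ) ^ p = (((1 - t ^ p : ℝ)) : ℂ) by push_cast; ring]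
      exact_mod_cast hR
    have hid := aux_id p a hper N (t : ℂ)
    simp only [hFdef, hGdef]
    field_simp
    linear_combination -hid
  rw [tendsto_iff_norm_sub_tendsto_zero]
  have hbnd : ∀ N : ℕ, ‖(∑ n ∈ Finset.range N, a n / (n + 1)) - ∫ t in (0:ℝ)..1, F t‖
      ≤ M / (N + 1) := by
    intro N
    rw [hps N, hkey N, norm_neg]
    calc ‖∫ t in (0:ℝ)..1, (t:ℂ)^N * G N t‖ ≤ ∫ t in (0:ℝ)..1, ‖(t:ℂ)^N * G N t‖ :=
          intervalIntegral.norm_integral_le_integral_norm zero_le_one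
      _ ≤ ∫ t in (0:ℝ)..1, M * t ^ N := by
          refine intervalIntegral.integral_mono_on zero_le_one ((hgint N).norm)
            ((continuous_const.mul (continuous_pow N)).intervalIntegrable 0 1) fun t ht => ?_
          rw [norm_mul, norm_pow, Complex.norm_real, Real.norm_eq_abs, abs_of_nonneg ht.1,
            mul_comm M]
          exact mul_le_mul_of_nonneg_left (hGbound N t ht) (pow_nonneg ht.1 N)
      _ = M / (N + 1) := by
          rw [intervalIntegral.integral_const_mul, integral_pow, one_pow,
            zero_pow (Nat.succ_ne_zero N)]
          push_cast
          ring
  refine squeeze_zero (fun N => norm_nonneg _) hbnd ?_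
  refine ((tendsto_const_div_atTop_nhds_zero_nat M).comp (tendsto_add_atTop_nat 1)).congr
    fun n => ?_
  show M / ((n + 1 : ℕ) : ℝ) = M / (n + 1)
  norm_cast
end

section
/- 1 - 1/4 + 1/7 - 1/10 + ⋯ = ∑_{n=0}^∞ (-1)ⁿ/(3n+1) = (ln 2)/3 + π/(3√3). -/
open Real

noncomputable def F (x : ℝ) : ℝ :=
  Real.log (1 + x) / 3 - Real.log (x ^ 2 - x + 1) / 6 +
    Real.arctan ((2 * x - 1) / Real.sqrt 3) / Real.sqrt 3

lemma quad_pos (x : ℝ) : 0 < x ^ 2 - x + 1 := by nlinarith [sq_nonneg (x - 1/2)]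

lemma hasDerivAt_F {x : ℝ} (hx : 0 ≤ x) : HasDerivAt F (1 / (1 + x ^ 3)) x := by
  have hs : Real.sqrt 3 ≠ 0 := by positivity
  have hs2 : Real.sqrt 3 ^ 2 = 3 := Real.sq_sqrt (by norm_num)
  have h1 : (0:ℝ) < 1 + x := by linarith
  have h2 : (0:ℝ) < x ^ 2 - x + 1 := quad_pos x
  have h3 : (0:ℝ) < 1 + x ^ 3 := by nlinarith
  have d1 : HasDerivAt (fun y : ℝ => Real.log (1 + y) / 3) (1 / (1 + x) / 3) x := by
    have : HasDerivAt (fun y : ℝ => 1 + y) 1 x := (hasDerivAt_id x).const_add 1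
    exact (this.log h1.ne').div_const 3
  have d2 : HasDerivAt (fun y : ℝ => Real.log (y ^ 2 - y + 1) / 6)
      ((2 * x - 1) / (x ^ 2 - x + 1) / 6) x := by
    have hp : HasDerivAt (fun y : ℝ => y ^ 2 - y + 1) (2 * x - 1) x := by
      have := ((hasDerivAt_pow 2 x).sub (hasDerivAt_id x)).add_const 1
      simpa using this
    exact (hp.log h2.ne').div_const 6
  have d3 : HasDerivAt (fun y : ℝ => Real.arctan ((2 * y - 1) / Real.sqrt 3) / Real.sqrt 3)
      ((1 / (1 + ((2 * x - 1) / Real.sqrt 3) ^ 2) * (2 / Real.sqrt 3)) / Real.sqrt 3) x := by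
    have hin : HasDerivAt (fun y : ℝ => (2 * y - 1) / Real.sqrt 3) (2 / Real.sqrt 3) x := by
      have : HasDerivAt (fun y : ℝ => 2 * y - 1) 2 x := by
        simpa using ((hasDerivAt_id x).const_mul 2).sub_const 1
      simpa using this.div_const (Real.sqrt 3)
    exact ((Real.hasDerivAt_arctan _).comp x hin).div_const _
  have := (d1.sub d2).add d3
  convert this using 1
  · rfl
  · rfl
  · rfl
  have hden : 1 + ((2 * x - 1) / Real.sqrt 3) ^ 2 = (3 + (2 * x - 1) ^ 2) / 3 := by
    field_simp
    rw [hs2]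
    ring
  rw [hden]
  have h4 : (0:ℝ) < 3 + (2 * x - 1) ^ 2 := by positivity
  have h2' : x * (x - 1) + 1 ≠ 0 := ne_of_gt (by nlinarith [h2])
  field_simp
  ring_nf
  rw [hs2]
  ring

lemma integral_val : ∫ x in (0:ℝ)..1, 1 / (1 + x ^ 3) =
    Real.log 2 / 3 + Real.pi / (3 * Real.sqrt 3) := by
  have hs : Real.sqrt 3 ≠ 0 := by positivity
  have hcont : ContinuousOn (fun x : ℝ => 1 / (1 + x ^ 3)) (Set.uIcc 0 1) := by
    apply ContinuousOn.div continuousOn_const (by fun_prop)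
    intro x hx
    rw [Set.uIcc_of_le (by norm_num)] at hx
    have := hx.1
    intro h
    nlinarith [pow_nonneg this 3]
  have := intervalIntegral.integral_eq_sub_of_hasDerivAt
    (f := F) (f' := fun x => 1 / (1 + x ^ 3)) (a := (0:ℝ)) (b := 1)
    (fun x hx => by
      rw [Set.uIcc_of_le (by norm_num)] at hx
      exact hasDerivAt_F hx.1)
    (hcont.intervalIntegrable)
  rw [this]
  have ha : Real.arctan (1 / Real.sqrt 3) = Real.pi / 6 := by
    rw [← Real.tan_pi_div_six, Real.arctan_tan] <;> nlinarith [Real.pi_pos]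
  unfold F
  norm_num
  rw [neg_div, Real.arctan_neg, ha]
  field_simp
  ring

lemma partial_sum_eq (N : ℕ) :
    ∑ n ∈ Finset.range N, (-1 : ℝ) ^ n / (3 * n + 1) =
      ∫ x in (0:ℝ)..1, ∑ n ∈ Finset.range N, (-1 : ℝ) ^ n * x ^ (3 * n) := by
  rw [intervalIntegral.integral_finset_sum (fun n _ => (Continuous.intervalIntegrable (by fun_prop) _ _))]
  refine Finset.sum_congr rfl fun n _ => ?_
  rw [intervalIntegral.integral_const_mul, integral_pow]
  push_cast
  norm_num
  ring

lemma key_bound (N : ℕ) :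
    |(∫ x in (0:ℝ)..1, 1 / (1 + x ^ 3)) - ∑ n ∈ Finset.range N, (-1 : ℝ) ^ n / (3 * n + 1)|
      ≤ 1 / (3 * N + 1) := by
  have hpos : ∀ x ∈ Set.uIcc (0:ℝ) 1, (0:ℝ) < 1 + x ^ 3 := by
    intro x hx
    rw [Set.uIcc_of_le (by norm_num)] at hx
    nlinarith [pow_nonneg hx.1 3]
  have hcont : ContinuousOn (fun x : ℝ => 1 / (1 + x ^ 3)) (Set.uIcc 0 1) :=
    ContinuousOn.div continuousOn_const (by fun_prop) (fun x hx => (hpos x hx).ne')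
  have hint1 : IntervalIntegrable (fun x : ℝ => 1 / (1 + x ^ 3)) MeasureTheory.volume 0 1 :=
    hcont.intervalIntegrable
  have hint2 : IntervalIntegrable
      (fun x : ℝ => ∑ n ∈ Finset.range N, (-1 : ℝ) ^ n * x ^ (3 * n))
      MeasureTheory.volume 0 1 :=
    Continuous.intervalIntegrable (by fun_prop) _ _
  rw [partial_sum_eq, ← intervalIntegral.integral_sub hint1 hint2]
  have heq : ∀ x ∈ Set.uIcc (0:ℝ) 1,
      1 / (1 + x ^ 3) - ∑ n ∈ Finset.range N, (-1 : ℝ) ^ n * x ^ (3 * n)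
        = (-1) ^ N * x ^ (3 * N) / (1 + x ^ 3) := by
    intro x hx
    have h3 := hpos x hx
    have hsum : ∑ n ∈ Finset.range N, (-1 : ℝ) ^ n * x ^ (3 * n)
        = ((-x ^ 3) ^ N - 1) / (-x ^ 3 - 1) := by
      rw [← geom_sum_eq (by nlinarith : (-x^3 : ℝ) ≠ 1)]
      refine Finset.sum_congr rfl fun n _ => ?_
      rw [neg_pow, pow_mul]
      ring
    rw [hsum, neg_pow (x ^ 3), pow_mul x 3 N]
    have hne : (-x ^ 3 - 1 : ℝ) ≠ 0 := by nlinarith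
    field_simp
    ring
  rw [intervalIntegral.integral_congr heq]
  calc |∫ x in (0:ℝ)..1, (-1) ^ N * x ^ (3 * N) / (1 + x ^ 3)|
      ≤ ∫ x in (0:ℝ)..1, |(-1) ^ N * x ^ (3 * N) / (1 + x ^ 3)| :=
        intervalIntegral.abs_integral_le_integral_abs (by norm_num)
    _ ≤ ∫ x in (0:ℝ)..1, x ^ (3 * N) := by
        apply intervalIntegral.integral_mono_on (by norm_num)
        · apply ContinuousOn.intervalIntegrable
          apply ContinuousOn.abs
          exact ContinuousOn.div (by fun_prop) (by fun_prop)
            (fun x hx => (hpos x hx).ne')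
        · exact (continuous_pow _).intervalIntegrable _ _
        · intro x hx
          have h3 : (0:ℝ) < 1 + x ^ 3 := by nlinarith [pow_nonneg hx.1 3]
          rw [abs_div, abs_mul, abs_pow, abs_neg, abs_one, one_pow, one_mul,
            abs_of_pos h3, abs_pow, abs_of_nonneg hx.1]
          rw [div_le_iff₀ h3]
          nlinarith [pow_nonneg hx.1 (3 * N), pow_nonneg hx.1 3,
            mul_nonneg (pow_nonneg hx.1 (3*N)) (pow_nonneg hx.1 3)]
    _ ≤ 1 / (3 * N + 1) := by
        rw [integral_pow]
        push_cast
        norm_num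

open Filter Topology

theorem sum_3n_plus_1 :
    Tendsto (fun N => ∑ n ∈ Finset.range N, (-1 : ℝ) ^ n / (3 * n + 1))
      atTop (𝓝 (Real.log 2 / 3 + Real.pi / (3 * Real.sqrt 3))) := by
  rw [← integral_val, tendsto_iff_dist_tendsto_zero]
  apply squeeze_zero (fun n => dist_nonneg) (g := fun N : ℕ => 1 / ((N : ℝ) + 1))
  · intro n
    rw [Real.dist_eq, abs_sub_comm]
    refine (key_bound n).trans ?_
    apply one_div_le_one_div_of_le (by positivity)
    push_cast
    linarith [Nat.cast_nonneg (α := ℝ) n]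
  · exact tendsto_one_div_add_atTop_nhds_zero_nat
end

section
/- For integers 0 < q < p, ∫₀^∞ t^{q-1}/(1 + t^p) dt = (π/p)/sin(qπ/p). -/
open Real MeasureTheory Set

lemma beta_real (a : ℝ) (h0 : 0 < a) (h1 : a < 1) :
    ∫ u in Set.Ioo (0:ℝ) 1, u ^ (a-1) * (1-u) ^ (-a) = Real.Gamma a * Real.Gamma (1-a) := by
  have h1a : 0 < 1 - a := by linarith
  have key : Complex.Gamma a * Complex.Gamma (1-(a:ℂ)) = Complex.betaIntegral a (1-(a:ℂ)) := by
    have h := Complex.Gamma_mul_Gamma_eq_betaIntegral (s := (a:ℂ)) (t := ((1-a:ℝ):ℂ))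
      (by simpa using h0) (by simpa using h1a)
    push_cast at h
    rw [h]
    norm_num [Complex.Gamma_one]
  have hbeta : Complex.betaIntegral a (1-(a:ℂ))
      = ((∫ u in (0:ℝ)..1, u ^ (a-1) * (1-u) ^ (-a) : ℝ) : ℂ) := by
    rw [Complex.betaIntegral, ← intervalIntegral.integral_ofReal]
    refine intervalIntegral.integral_congr fun x hx => ?_
    rw [uIcc_of_le zero_le_one] at hx
    have e1 : ((x:ℂ)) ^ ((a:ℂ) - 1) = ((x ^ (a-1) : ℝ) : ℂ) := by
      rw [show (a:ℂ) - 1 = ((a-1:ℝ):ℂ) by push_cast; ring, ← Complex.ofReal_cpow hx.1]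
    have e2 : (1 - (x:ℂ)) ^ (1 - (a:ℂ) - 1) = (((1-x) ^ (-a) : ℝ) : ℂ) := by
      rw [show (1:ℂ) - (x:ℂ) = ((1 - x : ℝ):ℂ) by push_cast; ring,
        show (1:ℂ) - (a:ℂ) - 1 = ((-a:ℝ):ℂ) by push_cast; ring,
        ← Complex.ofReal_cpow (by linarith [hx.2])]
    rw [e1, e2]; push_cast; ring
  have h2 : ((∫ u in (0:ℝ)..1, u ^ (a-1) * (1-u) ^ (-a) : ℝ) : ℂ)
      = ((Real.Gamma a * Real.Gamma (1-a) : ℝ) : ℂ) := by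
    rw [← hbeta, ← key, Complex.ofReal_mul, Complex.Gamma_ofReal,
      show (1:ℂ) - (a:ℂ) = ((1-a:ℝ):ℂ) by push_cast; ring, Complex.Gamma_ofReal]
  have h3 : (∫ u in (0:ℝ)..1, u ^ (a-1) * (1-u) ^ (-a)) = Real.Gamma a * Real.Gamma (1-a) :=
    mod_cast h2
  rw [← h3, intervalIntegral.integral_of_le zero_le_one, integral_Ioc_eq_integral_Ioo]

lemma integral_rpow_one_add (a : ℝ) (h0 : 0 < a) (h1 : a < 1) :
    ∫ x in Set.Ioi (0:ℝ), x ^ (a-1) / (1+x) = π / Real.sin (π * a) := by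
  set f : ℝ → ℝ := fun u => u / (1-u) with hf
  set f' : ℝ → ℝ := fun u => 1 / (1-u)^2 with hf'
  have hderiv : ∀ u ∈ Ioo (0:ℝ) 1, HasDerivWithinAt f (f' u) (Ioo 0 1) u := by
    intro u hu
    have hne : (1:ℝ) - u ≠ 0 := ne_of_gt (by linarith [hu.2])
    have : HasDerivAt f ((1*(1-u) - u*(0-1)) / (1-u)^2) u :=
      (hasDerivAt_id u).div ((hasDerivAt_const u 1).sub (hasDerivAt_id u)) hne
    refine this.hasDerivWithinAt.congr_deriv ?_
    simp only [hf']
    field_simp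
    ring
  have hinj : InjOn f (Ioo (0:ℝ) 1) := by
    intro u hu v hv h
    have h1u : (1:ℝ) - u ≠ 0 := by have := hu.2; intro h; linarith [(by linarith : u = 1)]
    have h1v : (1:ℝ) - v ≠ 0 := by have := hv.2; intro h; linarith [(by linarith : v = 1)]
    simp only [hf] at h
    field_simp at h
    nlinarith [h]
  have himg : f '' Ioo (0:ℝ) 1 = Ioi 0 := by
    ext y; constructor
    · rintro ⟨u, hu, rfl⟩
      exact div_pos hu.1 (by linarith [hu.2])
    · intro hy
      refine ⟨y / (1+y), ⟨div_pos hy (by linarith [mem_Ioi.mp hy]), ?_⟩, ?_⟩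
      · rw [div_lt_one (by linarith [mem_Ioi.mp hy])]; linarith [mem_Ioi.mp hy]
      · have hy' : (0:ℝ) < y := hy
        simp only [hf]
        have e : 1 - y/(1+y) = 1/(1+y) := by field_simp; ring
        rw [e]
        field_simp
  have := integral_image_eq_integral_abs_deriv_smul measurableSet_Ioo hderiv hinj
    (fun x => x ^ (a-1) / (1+x))
  rw [himg] at this
  rw [this]
  have hcong : ∀ u ∈ Ioo (0:ℝ) 1,
      |f' u| • (f u ^ (a-1) / (1 + f u)) = u ^ (a-1) * (1-u) ^ (-a) := by
    intro u hu
    have hu0 := hu.1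
    have hv0 : (0:ℝ) < 1 - u := by linarith [hu.2]
    have hfpos : 0 < f' u := by positivity
    have h1f : 1 + f u = 1 / (1-u) := by
      simp only [hf]; field_simp; ring
    have hdiv : f u ^ (a-1) = u ^ (a-1) / (1-u) ^ (a-1) := Real.div_rpow hu0.le hv0.le _
    rw [abs_of_pos hfpos, smul_eq_mul, h1f, hdiv]
    have hva : (0:ℝ) < (1-u) ^ (a-1) := Real.rpow_pos_of_pos hv0 _
    have hkey : (1-u) ^ (-a) = ((1-u) ^ (a-1))⁻¹ * (1-u)⁻¹ := by
      rw [← Real.rpow_neg_one (1-u), ← Real.rpow_neg hv0.le, ← Real.rpow_add hv0]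
      ring_nf
    rw [hkey]
    simp only [hf']
    field_simp
  rw [setIntegral_congr_fun measurableSet_Ioo hcong, beta_real a h0 h1,
    Real.Gamma_mul_Gamma_one_sub a]

theorem integral_rpow_sin (p q : ℕ) (h0 : 0 < q) (hqp : q < p) :
    ∫ t in Set.Ioi (0 : ℝ), t ^ (q - 1) / (1 + t ^ p) =
      (Real.pi / p) / Real.sin (q * Real.pi / p) := by
  have hp0 : (0:ℝ) < p := Nat.cast_pos.mpr (h0.trans hqp)
  set a : ℝ := q / p with ha
  have ha0 : 0 < a := div_pos (Nat.cast_pos.mpr h0) hp0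
  have ha1 : a < 1 := (div_lt_one hp0).mpr (Nat.cast_lt.mpr hqp)
  have key := integral_comp_rpow_Ioi_of_pos
    (g := fun y => (1/(p:ℝ)) * (y ^ (a-1) / (1+y))) hp0
  have step : ∫ t in Ioi (0:ℝ), t ^ (q-1) / (1+t^p)
      = ∫ x in Ioi (0:ℝ), ((p:ℝ) * x ^ ((p:ℝ)-1)) •
          ((1/(p:ℝ)) * ((x ^ ((p:ℕ):ℝ)) ^ (a-1) / (1 + x ^ ((p:ℕ):ℝ)))) := by
    refine setIntegral_congr_fun measurableSet_Ioi fun t ht => ?_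
    have ht0 : (0:ℝ) < t := ht
    have h1 : t ^ (p:ℕ) = t ^ ((p:ℕ):ℝ) := (Real.rpow_natCast t p).symm
    have h2 : t ^ (q-1:ℕ) = t ^ ((q:ℝ)-1) := by
      rw [← Real.rpow_natCast t (q-1), Nat.cast_sub h0, Nat.cast_one]
    have h3 : (t ^ ((p:ℕ):ℝ)) ^ (a-1) = t ^ ((q:ℝ) - (p:ℝ)) := by
      rw [← Real.rpow_mul ht0.le]
      congr 1
      rw [ha]
      field_simp
    have h4 : t ^ ((q:ℝ)-1) = t ^ ((p:ℝ)-1) * t ^ ((q:ℝ)-(p:ℝ)) := by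
      rw [← Real.rpow_add ht0]; ring_nf
    have h5 : (0:ℝ) < 1 + t ^ ((p:ℕ):ℝ) := by positivity
    rw [smul_eq_mul, h1, h2, h3, h4]
    field_simp
  rw [step, key, integral_const_mul, integral_rpow_one_add a ha0 ha1,
    show π * a = (q:ℝ) * π / p by rw [ha]; ring]
  ring
end

section
/- For complex z with Re(z) > 0, -γ + ∑_{k=0}^∞ (1/(k+1) - 1/(z+k)) = -γ + ∫₀¹ (1 - t^{z-1})/(1 - t) dt, i.e., the digamma function ψ(z) admits this integral representation. -/
open MeasureTheory Set Filter Topology intervalIntegral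

lemma main_bound (z : ℂ) (δ : ℝ) (hδ : δ = min (1/2) (1/(2*(‖z-1‖+1)))) :
    ∀ t : ℝ, t ∈ Set.Ioo (0:ℝ) 1 →
      ‖(1 - (t : ℂ) ^ (z - 1)) / (1 - (t : ℂ))‖ ≤
        (1 + t ^ (z.re - 1)) / δ + 4 * ‖z - 1‖ := by
  have hc : (0:ℝ) < ‖z-1‖ + 1 := by positivity
  have hδ0 : 0 < δ := by rw [hδ]; positivity
  intro t ht
  obtain ⟨ht0, ht1⟩ := ht
  have h1t : (0:ℝ) < 1 - t := by linarith
  have hcast : (1:ℂ) - (t:ℂ) = ((1 - t : ℝ) : ℂ) := by push_cast; ring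
  have hne : (1 : ℂ) - (t:ℂ) ≠ 0 := by
    rw [hcast]
    exact_mod_cast h1t.ne'
  have hnorm_den : ‖(1:ℂ) - (t:ℂ)‖ = 1 - t := by
    rw [hcast, Complex.norm_real, Real.norm_eq_abs, abs_of_pos h1t]
  have hnum_le : ‖(1:ℂ) - (t:ℂ)^(z-1)‖ ≤ 1 + t ^ (z.re - 1) := by
    calc ‖(1:ℂ) - (t:ℂ)^(z-1)‖ ≤ ‖(1:ℂ)‖ + ‖(t:ℂ)^(z-1)‖ := norm_sub_le _ _
    _ = 1 + t ^ (z.re - 1) := by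
        rw [norm_one, Complex.norm_cpow_eq_rpow_re_of_pos ht0,
          Complex.sub_re, Complex.one_re]
  have hpow_nonneg : (0:ℝ) ≤ t ^ (z.re - 1) := Real.rpow_nonneg ht0.le _
  rw [norm_div, hnorm_den]
  rcases le_or_gt t (1 - δ) with hcase | hcase
  · have hδ1t : δ ≤ 1 - t := by linarith
    have : ‖(1:ℂ) - (t:ℂ)^(z-1)‖ / (1 - t) ≤ (1 + t ^ (z.re - 1)) / δ := by
      apply div_le_div₀ (by positivity) hnum_le hδ0 hδ1t
    nlinarith [norm_nonneg (z-1)]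
  · -- t close to 1
    have ht2 : (1:ℝ)/2 ≤ t := by
      have : δ ≤ 1/2 := by rw [hδ]; exact min_le_left _ _
      linarith
    have hlog : -Real.log t ≤ (1 - t)/t := by
      have := Real.log_le_sub_one_of_pos (x := t⁻¹) (by positivity)
      rw [Real.log_inv] at this
      have : -Real.log t ≤ t⁻¹ - 1 := this
      rw [div_eq_mul_inv]
      have htinv : t⁻¹ - 1 = (1-t) * t⁻¹ := by field_simp
      linarith [htinv ▸ this]
    have hlog2 : -Real.log t ≤ 2 * (1 - t) := by
      have h2 : (1-t)/t ≤ (1-t) * 2 := by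
        rw [div_eq_mul_inv]
        apply mul_le_mul_of_nonneg_left _ h1t.le
        rw [inv_le_comm₀ (by linarith) (by norm_num)]; linarith
      linarith
    set w : ℂ := (z - 1) * (Real.log t : ℂ) with hw
    have hcpow : (t:ℂ)^(z-1) = Complex.exp w := by
      rw [Complex.cpow_def_of_ne_zero (by exact_mod_cast ht0.ne'), hw,
        Complex.ofReal_log ht0.le]; ring_nf
    have hwnorm : ‖w‖ ≤ 2 * ‖z-1‖ * (1 - t) := by
      rw [hw, norm_mul, Complex.norm_real, Real.norm_eq_abs,
        abs_of_nonpos (Real.log_nonpos ht0.le ht1.le)]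
      calc ‖z-1‖ * (-Real.log t) ≤ ‖z-1‖ * (2*(1-t)) :=
            mul_le_mul_of_nonneg_left hlog2 (norm_nonneg _)
        _ = 2 * ‖z-1‖ * (1-t) := by ring
    have hw1 : ‖w‖ ≤ 1 := by
      have h1 : 1 - t < δ := by linarith
      have h2 : δ ≤ 1/(2*(‖z-1‖+1)) := by rw [hδ]; exact min_le_right _ _
      have : 2 * ‖z-1‖ * (1-t) ≤ 2 * ‖z-1‖ * (1/(2*(‖z-1‖+1))) := by
        apply mul_le_mul_of_nonneg_left (by linarith) (by positivity)
      have h3 : 2 * ‖z-1‖ * (1/(2*(‖z-1‖+1))) = ‖z-1‖/(‖z-1‖+1) := by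
        field_simp
      have h4 : ‖z-1‖/(‖z-1‖+1) ≤ 1 := by
        rw [div_le_one hc]; linarith
      linarith
    have hexp : ‖(1:ℂ) - (t:ℂ)^(z-1)‖ ≤ 4 * ‖z-1‖ * (1-t) := by
      rw [hcpow, norm_sub_rev]
      calc ‖Complex.exp w - 1‖ ≤ 2 * ‖w‖ := Complex.norm_exp_sub_one_le hw1
        _ ≤ 2 * (2 * ‖z-1‖ * (1-t)) := by linarith
        _ = 4 * ‖z-1‖ * (1-t) := by ring
    have : ‖(1:ℂ) - (t:ℂ)^(z-1)‖ / (1 - t) ≤ 4 * ‖z-1‖ := by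
      rw [div_le_iff₀ h1t]; linarith
    have hfirst : 0 ≤ (1 + t ^ (z.re - 1)) / δ := by positivity
    linarith

lemma g_int (z : ℂ) (hz : 0 < z.re) (δ : ℝ) (hδ0 : 0 < δ) :
    IntegrableOn (fun t : ℝ => (1 + t ^ (z.re - 1)) / δ + 4 * ‖z - 1‖) (Ioo (0:ℝ) 1) := by
  have h1 : IntegrableOn (fun t : ℝ => t ^ (z.re - 1)) (Ioo (0:ℝ) 1) := by
    have := (intervalIntegral.intervalIntegrable_rpow' (a := 0) (b := 1)
      (r := z.re - 1) (by linarith)).1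
    exact this.mono_set Ioo_subset_Ioc_self
  have h2 : IntegrableOn (fun _ : ℝ => (1:ℝ)) (Ioo (0:ℝ) 1) := integrableOn_const (by
    simp [Real.volume_Ioo])
  have h3 : IntegrableOn (fun _ : ℝ => 4 * ‖z - 1‖) (Ioo (0:ℝ) 1) := integrableOn_const (by
    simp [Real.volume_Ioo])
  exact ((h2.add h1).div_const δ).add h3

lemma per_k (z : ℂ) (hz : 0 < z.re) (k : ℕ) :
    ∫ t in Ioo (0:ℝ) 1, ((t:ℂ)^(k:ℂ) - (t:ℂ)^((k:ℂ)+z-1)) =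
      1/((k:ℂ)+1) - 1/(z+(k:ℂ)) := by
  have hk1 : (-1:ℝ) < ((k:ℂ)).re := by
    simp
    linarith [Nat.cast_nonneg (α := ℝ) k]
  have hk2 : (-1:ℝ) < ((k:ℂ)+z-1).re := by
    simp [Complex.add_re, Complex.sub_re]
    linarith [Nat.cast_nonneg (α := ℝ) k]
  have i1 : IntervalIntegrable (fun t : ℝ => (t:ℂ)^(k:ℂ)) volume 0 1 :=
    intervalIntegrable_cpow' hk1
  have i2 : IntervalIntegrable (fun t : ℝ => (t:ℂ)^((k:ℂ)+z-1)) volume 0 1 :=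
    intervalIntegrable_cpow' hk2
  have : ∫ t in (0:ℝ)..1, ((t:ℂ)^(k:ℂ) - (t:ℂ)^((k:ℂ)+z-1)) =
      1/((k:ℂ)+1) - 1/(z+(k:ℂ)) := by
    rw [intervalIntegral.integral_sub i1 i2, integral_cpow (Or.inl hk1),
      integral_cpow (Or.inl hk2)]
    have hk10 : (k:ℂ) + 1 ≠ 0 := by
      intro h
      have := congrArg Complex.re h
      simp at this
      nlinarith [this]
    have hz0 : (k:ℂ) + z - 1 + 1 ≠ 0 := by
      intro h
      have := congrArg Complex.re h
      simp [Complex.add_re, Complex.sub_re] at this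
      nlinarith [this]
    rw [Complex.ofReal_one, Complex.ofReal_zero, Complex.one_cpow, Complex.one_cpow,
      Complex.zero_cpow hk10, Complex.zero_cpow hz0]
    ring_nf
  rw [← this, intervalIntegral.integral_of_le zero_le_one,
    MeasureTheory.integral_Ioc_eq_integral_Ioo]

lemma summable_f (z : ℂ) (hz : 0 < z.re) :
    Summable (fun k : ℕ => (1:ℂ)/(k+1) - 1/(z+k)) := by
  set c := min z.re 1 with hc
  have hc0 : 0 < c := lt_min hz one_pos
  have hc1 : c ≤ 1 := min_le_right _ _
  have hsum : Summable (fun k : ℕ => ‖z-1‖/c * (1/((k:ℝ)+1)^2)) := by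
    apply Summable.mul_left
    have h := (Real.summable_one_div_nat_pow (p := 2)).2 (by norm_num)
    have := (summable_nat_add_iff 1).2 h
    refine this.congr fun k => ?_
    push_cast
    ring
  apply Summable.of_norm_bounded hsum
  intro k
  have hzk : z + (k:ℂ) ≠ 0 := by
    intro h
    have := congrArg Complex.re h
    simp at this
    nlinarith [this]
  have hk1 : ((k:ℂ)+1) ≠ 0 := by
    intro h
    have := congrArg Complex.re h
    simp at this
    nlinarith [this]
  have heq : (1:ℂ)/(k+1) - 1/(z+k) = (z-1)/(((k:ℂ)+1)*(z+k)) := by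
    field_simp
    ring
  rw [heq, norm_div, norm_mul]
  have hn1 : ‖(k:ℂ)+1‖ = (k:ℝ)+1 := by
    rw [show (k:ℂ)+1 = (((k:ℝ)+1 : ℝ) : ℂ) by push_cast; ring, Complex.norm_real,
      Real.norm_eq_abs, abs_of_pos (by positivity)]
  have hn2 : c * ((k:ℝ)+1) ≤ ‖z+(k:ℂ)‖ := by
    have hre : (z + (k:ℂ)).re = z.re + k := by simp
    have := Complex.re_le_norm (z + (k:ℂ))
    rw [hre] at this
    have h1 : c * ((k:ℝ)+1) ≤ z.re + k := by
      have : c ≤ z.re := min_le_left _ _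
      nlinarith [Nat.cast_nonneg (α := ℝ) k]
    calc c * ((k:ℝ)+1) ≤ z.re + k := h1
      _ ≤ ‖z + (k:ℂ)‖ := this
  rw [hn1]
  have hzknorm : (0:ℝ) < ‖z+(k:ℂ)‖ := norm_pos_iff.mpr hzk
  rw [div_le_iff₀ (mul_pos (by positivity) hzknorm)]
  have hnn : 0 ≤ ‖z - 1‖ := norm_nonneg _
  calc ‖z-1‖ ≤ ‖z-1‖/c * (c) := by rw [div_mul_cancel₀]; exact hc0.ne'
    _ ≤ ‖z-1‖/c * (1/((k:ℝ)+1)^2 * (((k:ℝ)+1) * ‖z+(k:ℂ)‖)) := by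
        apply mul_le_mul_of_nonneg_left _ (by positivity)
        have hpos : (0:ℝ) < ((k:ℝ)+1)^2 := by positivity
        rw [one_div, ← div_eq_inv_mul, le_div_iff₀ hpos]
        calc c * ((k:ℝ)+1)^2 = (c * ((k:ℝ)+1)) * ((k:ℝ)+1) := by ring
          _ ≤ ‖z+(k:ℂ)‖ * ((k:ℝ)+1) := by
              apply mul_le_mul_of_nonneg_right hn2 (by positivity)
          _ = ((k:ℝ)+1) * ‖z+(k:ℂ)‖ := by ring
    _ = ‖z-1‖/c * (1/((k:ℝ)+1)^2) * (((k:ℝ)+1) * ‖z+(k:ℂ)‖) := by ring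

theorem digamma_integral_repr (z : ℂ) (hz : 0 < z.re) :
    -(Real.eulerMascheroniConstant : ℂ) +
      ∑' k : ℕ, ((1 : ℂ) / (k + 1) - 1 / (z + k)) =
    -(Real.eulerMascheroniConstant : ℂ) +
      ∫ t in (0 : ℝ)..1, (1 - (t : ℂ) ^ (z - 1)) / (1 - (t : ℂ)) := by
  congr 1
  rw [intervalIntegral.integral_of_le zero_le_one,
    MeasureTheory.integral_Ioc_eq_integral_Ioo]
  set δ : ℝ := min (1/2) (1/(2*(‖z-1‖+1))) with hδ
  have hδ0 : 0 < δ := by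
    apply lt_min (by norm_num)
    positivity
  set g : ℝ → ℝ := fun t => (1 + t ^ (z.re - 1)) / δ + 4 * ‖z - 1‖ with hg
  set main : ℝ → ℂ := fun t => (1 - (t:ℂ)^(z-1))/(1-(t:ℂ)) with hmain
  set F : ℕ → ℝ → ℂ := fun n t => (1 - (t:ℂ)^n) * main t with hF
  -- continuity of main on Ioo
  have hcont : ContinuousOn main (Ioo (0:ℝ) 1) := by
    apply ContinuousOn.div
    · apply continuousOn_const.sub
      intro t ht
      exact (Complex.continuousAt_ofReal_cpow_const t (z-1)
        (Or.inr ht.1.ne')).continuousWithinAt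
    · exact continuousOn_const.sub (Complex.continuous_ofReal.continuousOn)
    · intro t ht h
      have : (1:ℝ) = t := by exact_mod_cast sub_eq_zero.mp h
      linarith [ht.2]
  -- partial sums equal integrals of F n
  have hpartial : ∀ n : ℕ, ∑ k ∈ Finset.range n, ((1:ℂ)/(k+1) - 1/(z+k)) =
      ∫ t in Ioo (0:ℝ) 1, F n t := by
    intro n
    have hint : ∀ k ∈ Finset.range n, IntegrableOn
        (fun t : ℝ => (t:ℂ)^(k:ℂ) - (t:ℂ)^((k:ℂ)+z-1)) (Ioo (0:ℝ) 1) := by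
      intro k _
      have hk1 : (-1:ℝ) < ((k:ℂ)).re := by
        simp
        linarith [Nat.cast_nonneg (α := ℝ) k]
      have hk2 : (-1:ℝ) < ((k:ℂ)+z-1).re := by
        simp [Complex.add_re, Complex.sub_re]
        linarith [Nat.cast_nonneg (α := ℝ) k]
      have := ((intervalIntegrable_cpow' (a := 0) (b := 1) hk1).sub
        (intervalIntegrable_cpow' (a := 0) (b := 1) hk2)).1
      exact this.mono_set Ioo_subset_Ioc_self
    calc ∑ k ∈ Finset.range n, ((1:ℂ)/(k+1) - 1/(z+k))
        = ∑ k ∈ Finset.range n, ∫ t in Ioo (0:ℝ) 1,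
            ((t:ℂ)^(k:ℂ) - (t:ℂ)^((k:ℂ)+z-1)) := by
          refine Finset.sum_congr rfl fun k _ => ?_
          rw [per_k z hz k]
      _ = ∫ t in Ioo (0:ℝ) 1, ∑ k ∈ Finset.range n,
            ((t:ℂ)^(k:ℂ) - (t:ℂ)^((k:ℂ)+z-1)) :=
          (MeasureTheory.integral_finset_sum _ hint).symm
      _ = ∫ t in Ioo (0:ℝ) 1, F n t := by
          apply MeasureTheory.setIntegral_congr_fun measurableSet_Ioo
          intro t ht
          have ht0 : (t:ℂ) ≠ 0 := by exact_mod_cast ht.1.ne'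
          have ht1 : (t:ℂ) ≠ 1 := by
            intro h
            have : (t:ℝ) = 1 := by exact_mod_cast h
            linarith [ht.2]
          have hterm : ∀ k : ℕ, (t:ℂ)^(k:ℂ) - (t:ℂ)^((k:ℂ)+z-1) =
              (t:ℂ)^k * (1 - (t:ℂ)^(z-1)) := by
            intro k
            rw [show ((k:ℂ)+z-1) = (k:ℂ) + (z-1) by ring, Complex.cpow_add _ _ ht0,
              Complex.cpow_natCast]
            ring
          simp only [hterm, ← Finset.sum_mul, geom_sum_eq ht1]
          have h1t : (t:ℂ) - 1 ≠ 0 := sub_ne_zero.mpr ht1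
          have h1t' : (1:ℂ) - (t:ℂ) ≠ 0 := by
            intro h; apply h1t; rw [← neg_sub] at h; simpa using neg_eq_zero.mp h
          show _ = (1 - (t:ℂ)^n) * ((1 - (t:ℂ)^(z-1))/(1-(t:ℂ)))
          field_simp
          ring
  -- dominated convergence
  have htend : Tendsto (fun n => ∫ t in Ioo (0:ℝ) 1, F n t) atTop
      (𝓝 (∫ t in Ioo (0:ℝ) 1, main t)) := by
    apply MeasureTheory.tendsto_integral_of_dominated_convergence g
    · intro n
      apply ContinuousOn.aestronglyMeasurable _ measurableSet_Ioo
      exact (continuousOn_const.sub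
        ((Complex.continuous_ofReal.pow n).continuousOn)).mul hcont
    · exact g_int z hz δ hδ0
    · intro n
      rw [ae_restrict_iff' measurableSet_Ioo]
      filter_upwards with t ht
      have hb := main_bound z δ hδ t ht
      have hfac : ‖1 - (t:ℂ)^n‖ ≤ 1 := by
        rw [show (1:ℂ) - (t:ℂ)^n = ((1 - t^n : ℝ) : ℂ) by push_cast; ring,
          Complex.norm_real, Real.norm_eq_abs, abs_of_nonneg (by
            nlinarith [pow_le_one₀ ht.1.le ht.2.le (n := n),
              pow_nonneg ht.1.le n])]
        nlinarith [pow_nonneg ht.1.le n]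
      calc ‖F n t‖ = ‖1 - (t:ℂ)^n‖ * ‖main t‖ := norm_mul _ _
        _ ≤ 1 * ‖main t‖ := by
            apply mul_le_mul_of_nonneg_right hfac (norm_nonneg _)
        _ = ‖main t‖ := one_mul _
        _ ≤ g t := hb
    · rw [ae_restrict_iff' measurableSet_Ioo]
      filter_upwards with t ht
      have hpow : Tendsto (fun n : ℕ => (t:ℂ)^n) atTop (𝓝 0) := by
        apply tendsto_pow_atTop_nhds_zero_of_norm_lt_one
        rw [Complex.norm_real, Real.norm_eq_abs, abs_of_pos ht.1]
        exact ht.2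
      have h1 : Tendsto (fun n : ℕ => (1:ℂ) - (t:ℂ)^n) atTop (𝓝 (1 - 0)) :=
        tendsto_const_nhds.sub hpow
      have := h1.mul_const (main t)
      simpa using this
  -- conclude
  have hsum := (summable_f z hz).hasSum.tendsto_sum_nat
  rw [show (fun n => ∑ k ∈ Finset.range n, ((1:ℂ)/(k+1) - 1/(z+k))) =
      (fun n => ∫ t in Ioo (0:ℝ) 1, F n t) from funext hpartial] at hsum
  exact tendsto_nhds_unique hsum htend
end
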